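/- arXiv:2410.00206 — 2 statements merged into one kernel-verified Lean document; each statement's English description precedes it below -/
import Mathlib

section
/- Let E and X be finite sets, and let a, b : X → E × Bool be functions such that a(x) ≠ b(x) for every x ∈ X. Then there exists a function σ : E → Bool such that 4 · |{x ∈ X : σ((a x).1) = (a x).2 and σ((b x).1) = (b x).2}| ≤ |X|. -/
open Finset

/-- Per-crossing counting: the number of selections satisfying two distinct
constraints is at most a quarter of all selections. -/
theorem twin_aux {E : Type*} [Fintype E] [DecidableEq E] (e1 e2 : E) (b1 b2 : Bool)
    (h : (e1, b1) ≠ (e2, b2)) :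
    4 * (Finset.univ.filter (fun σ : E → Bool => σ e1 = b1 ∧ σ e2 = b2)).card
      ≤ Fintype.card (E → Bool) := by
  by_cases he : e1 = e2
  · subst he
    have hb : b1 ≠ b2 := by simpa using h
    have hempty : (Finset.univ.filter (fun σ : E → Bool => σ e1 = b1 ∧ σ e1 = b2)) = ∅ := by
      ext σ
      simp only [Finset.mem_filter, Finset.mem_univ, true_and, Finset.notMem_empty, iff_false]
      rintro ⟨h1, h2⟩
      exact hb (h1 ▸ h2)
    simp [hempty]
  · have hinj : Function.Injective
        (fun p : {σ : E → Bool // σ e1 = b1 ∧ σ e2 = b2} × Bool × Bool =>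
          Function.update (Function.update p.1.val e1 p.2.1) e2 p.2.2) := by
      rintro ⟨⟨σ, hσ1, hσ2⟩, c, d⟩ ⟨⟨τ, hτ1, hτ2⟩, c', d'⟩ hfun
      simp only at hfun
      have hd : d = d' := by
        have := congrFun hfun e2
        simpa using this
      have hc : c = c' := by
        have := congrFun hfun e1
        simpa [Function.update_of_ne he, Ne.symm he] using this
      have hστ : σ = τ := by
        funext e
        by_cases h1 : e = e1
        · subst h1; rw [hσ1, hτ1]
        · by_cases h2 : e = e2
          · subst h2; rw [hσ2, hτ2]
          · have := congrFun hfun e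
            simpa [Function.update_of_ne h1, Function.update_of_ne h2] using this
      simp [hστ, hc, hd]
    have hcard := Fintype.card_le_of_injective _ hinj
    have hc2 : Fintype.card ({σ : E → Bool // σ e1 = b1 ∧ σ e2 = b2} × Bool × Bool)
        = (Finset.univ.filter (fun σ : E → Bool => σ e1 = b1 ∧ σ e2 = b2)).card * 4 := by
      simp [Fintype.card_subtype]
    linarith [hcard, hc2]

/-- Twin-selection lemma (combinatorial core of Lemma `lem:4to1`):
given finite sets `E`, `X` and maps `a b : X → E × Bool` with `a x ≠ b x`
for all `x`, there is a selection `σ : E → Bool` such that at most a quarter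
of the elements of `X` "survive", i.e. satisfy
`σ (a x).1 = (a x).2 ∧ σ (b x).1 = (b x).2`. -/
theorem twin_selection {E X : Type*} [Fintype E] [Fintype X]
    (a b : X → E × Bool) (hab : ∀ x, a x ≠ b x) :
    ∃ σ : E → Bool,
      4 * (Finset.univ.filter
            (fun x => σ (a x).1 = (a x).2 ∧ σ (b x).1 = (b x).2)).card
        ≤ Fintype.card X := by
  classical
  have key : ∀ x : X, 4 * (Finset.univ.filter
      (fun σ : E → Bool => σ (a x).1 = (a x).2 ∧ σ (b x).1 = (b x).2)).card
      ≤ Fintype.card (E → Bool) := fun x =>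
    twin_aux _ _ _ _ (by simpa using hab x)
  have hsum : ∑ σ : E → Bool, 4 * (Finset.univ.filter
        (fun x : X => σ (a x).1 = (a x).2 ∧ σ (b x).1 = (b x).2)).card
      ≤ ∑ _σ : E → Bool, Fintype.card X := by
    have swap : ∑ σ : E → Bool, (Finset.univ.filter
          (fun x : X => σ (a x).1 = (a x).2 ∧ σ (b x).1 = (b x).2)).card
        = ∑ x : X, (Finset.univ.filter
          (fun σ : E → Bool => σ (a x).1 = (a x).2 ∧ σ (b x).1 = (b x).2)).card := by
      simp only [Finset.card_filter]
      exact Finset.sum_comm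
    calc ∑ σ : E → Bool, 4 * (Finset.univ.filter
          (fun x : X => σ (a x).1 = (a x).2 ∧ σ (b x).1 = (b x).2)).card
        = 4 * ∑ σ : E → Bool, (Finset.univ.filter
          (fun x : X => σ (a x).1 = (a x).2 ∧ σ (b x).1 = (b x).2)).card := by
          rw [Finset.mul_sum]
      _ = ∑ x : X, 4 * (Finset.univ.filter
          (fun σ : E → Bool => σ (a x).1 = (a x).2 ∧ σ (b x).1 = (b x).2)).card := by
          rw [swap, Finset.mul_sum]
      _ ≤ ∑ _x : X, Fintype.card (E → Bool) := Finset.sum_le_sum fun x _ => key x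
      _ = ∑ _σ : E → Bool, Fintype.card X := by
          simp [Finset.sum_const, mul_comm]
  have hne : (Finset.univ : Finset (E → Bool)).Nonempty := Finset.univ_nonempty
  obtain ⟨σ, _, hσ⟩ := Finset.exists_le_of_sum_le hne hsum
  exact ⟨σ, hσ⟩
end

section
/- Let E and X be finite sets, let k be a natural number, and let a, b : X → E × Bool be functions such that a(x) ≠ b(x) for every x ∈ X. If |X| ≤ 4·k, then there exists a function σ : E → Bool such that |{x ∈ X : σ((a x).1) = (a x).2 and σ((b x).1) = (b x).2}| ≤ k. -/
open Finset

/-- Lemma `lem:4to1` in quantitative form: if the number of crossings `|X|`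
is at most `4 * k`, then there is a selection `σ : E → Bool` under which at
most `k` crossings survive. -/
theorem twin_selection_of_le {E X : Type*} [Fintype E] [Fintype X] (k : ℕ)
    (a b : X → E × Bool) (hab : ∀ x, a x ≠ b x)
    (hX : Fintype.card X ≤ 4 * k) :
    ∃ σ : E → Bool,
      (Finset.univ.filter
        (fun x => σ (a x).1 = (a x).2 ∧ σ (b x).1 = (b x).2)).card ≤ k := by
  classical
  set F : (E → Bool) → ℕ := fun σ =>
    (Finset.univ.filter
      (fun x => σ (a x).1 = (a x).2 ∧ σ (b x).1 = (b x).2)).card with hF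
  -- For each crossing x, at most a quarter of all σ let x survive.
  have key : ∀ x : X,
      4 * (univ.filter (fun σ : E → Bool =>
        σ (a x).1 = (a x).2 ∧ σ (b x).1 = (b x).2)).card ≤ Fintype.card (E → Bool) := by
    intro x
    set S := univ.filter (fun σ : E → Bool =>
        σ (a x).1 = (a x).2 ∧ σ (b x).1 = (b x).2) with hS
    by_cases he : (a x).1 = (b x).1
    · have hb : (a x).2 ≠ (b x).2 := by
        intro h; exact hab x (Prod.ext he h)
      have hSempty : S = ∅ := by
        ext σ
        simp only [hS, mem_filter, mem_univ, true_and, Finset.notMem_empty, iff_false]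
        rintro ⟨h1, h2⟩
        rw [he] at h1
        exact hb (h1 ▸ h2)
      simp [hSempty]
    · -- inject S × Bool × Bool into E → Bool
      set g : ((E → Bool) × (Bool × Bool)) → (E → Bool) := fun p =>
        Function.update (Function.update p.1 (a x).1 p.2.1) (b x).1 p.2.2 with hg
      have hinj : Set.InjOn g ((S ×ˢ (univ : Finset (Bool × Bool))) : Finset _) := by
        rintro ⟨σ, c, d⟩ hp ⟨σ', c', d'⟩ hp' heq
        simp only [coe_product, Set.mem_prod, mem_coe, hS, mem_filter, mem_univ, true_and]
          at hp hp'
        have hd : d = d' := by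
          have := congrFun heq (b x).1
          simpa [hg, Function.update] using this
        have hc : c = c' := by
          have := congrFun heq (a x).1
          simpa [hg, Function.update_of_ne (Ne.symm (fun h => he h.symm)),
            Function.update_self] using this
        have hσ : σ = σ' := by
          funext e
          by_cases h1 : e = (a x).1
          · subst h1; rw [hp.1.1, hp'.1.1]
          · by_cases h2 : e = (b x).1
            · subst h2; rw [hp.1.2, hp'.1.2]
            · have := congrFun heq e
              simpa [hg, Function.update_of_ne h1, Function.update_of_ne h2] using this
        simp [hσ, hc, hd]
      have hcard := Finset.card_le_card_of_injOn g (fun p _ => mem_univ _) hinj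
      have hprod : (S ×ˢ (univ : Finset (Bool × Bool))).card = S.card * 4 := by
        simp [Finset.card_product]
      rw [hprod] at hcard
      calc 4 * S.card = S.card * 4 := by ring
        _ ≤ (univ : Finset (E → Bool)).card := hcard
        _ = Fintype.card (E → Bool) := rfl
  -- sum over all σ
  have hsum : ∑ σ : E → Bool, F σ
      = ∑ x : X, (univ.filter (fun σ : E → Bool =>
        σ (a x).1 = (a x).2 ∧ σ (b x).1 = (b x).2)).card := by
    simp only [hF, Finset.card_filter]
    rw [Finset.sum_comm]
  have hbound : 4 * ∑ σ : E → Bool, F σ ≤ 4 * (k * Fintype.card (E → Bool)) := by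
    rw [hsum, Finset.mul_sum]
    calc ∑ x : X, 4 * (univ.filter (fun σ : E → Bool =>
          σ (a x).1 = (a x).2 ∧ σ (b x).1 = (b x).2)).card
        ≤ ∑ _x : X, Fintype.card (E → Bool) := Finset.sum_le_sum fun x _ => key x
      _ = Fintype.card X * Fintype.card (E → Bool) := by
          simp [Finset.sum_const, mul_comm]
      _ ≤ 4 * k * Fintype.card (E → Bool) := by
          exact Nat.mul_le_mul_right _ hX
      _ = 4 * (k * Fintype.card (E → Bool)) := by ring
  have hsum' : ∑ σ : E → Bool, F σ ≤ k * Fintype.card (E → Bool) :=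
    Nat.le_of_mul_le_mul_left hbound (by norm_num)
  -- averaging
  have hne : (univ : Finset (E → Bool)).Nonempty := univ_nonempty
  obtain ⟨σ, _, hσ⟩ := Finset.exists_le_of_sum_le hne (by
    calc ∑ σ : E → Bool, F σ ≤ k * Fintype.card (E → Bool) := hsum'
      _ = ∑ _σ : E → Bool, k := by simp [mul_comm]
    )
  exact ⟨σ, hσ⟩
end
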